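/- The first-order (equivalently second-order, since the second derivative at 0 vanishes) Taylor approximation of the Boltzmann price around balanced imbalance satisfies |P^{boltzmann}(β) - (P^{mid} + (β(P^a - P^b)/2)·θ)| ≤ C·|θ|³ for some constant C depending only on β and P^a - P^b, uniformly for θ ∈ [-1/2, 1/2]. -/

import Mathlib

/-!
Factoring `exp (-β / 2)` out of both Boltzmann weights shows that the Boltzmann price is
`P^mid + (P^a - P^b) / 2 * tanh (β θ)`, so the error of the linear approximation is
`(P^a - P^b) / 2 * (tanh (β θ) - β θ)`. Since `tanh' = 1 - tanh²` and `|tanh t| ≤ |t|`, the mean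
value inequality gives `|tanh x - x| ≤ |x|³`.
-/

open Real

namespace Real

theorem hasDerivAt_tanh (x : ℝ) : HasDerivAt tanh (1 - tanh x ^ 2) x := by
  have h := (hasDerivAt_sinh x).div (hasDerivAt_cosh x) (cosh_pos x).ne'
  have hfun : sinh / cosh = tanh := funext fun t => (tanh_eq_sinh_div_cosh t).symm
  rw [hfun] at h
  refine h.congr_deriv ?_
  rw [tanh_eq_sinh_div_cosh]
  field_simp

theorem abs_tanh_le_abs (x : ℝ) : |tanh x| ≤ |x| := by
  have hderiv_le (t : ℝ) : ‖1 - tanh t ^ 2‖ ≤ 1 := by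
    rw [norm_eq_abs, abs_le]
    constructor <;> nlinarith [tanh_sq_lt_one t, sq_nonneg (tanh t)]
  simpa [tanh_zero] using convex_univ.norm_image_sub_le_of_norm_hasDerivWithin_le
    (fun t _ => (hasDerivAt_tanh t).hasDerivWithinAt) (fun t _ => hderiv_le t)
    (Set.mem_univ 0) (Set.mem_univ x)

theorem abs_tanh_sub_self_le (x : ℝ) : |tanh x - x| ≤ |x| ^ 3 := by
  have hderiv (t : ℝ) :
      HasDerivWithinAt (fun s => tanh s - s) (-tanh t ^ 2) (Set.Icc (-|x|) |x|) t := by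
    refine (((hasDerivAt_tanh t).sub (hasDerivAt_id' t)).congr_deriv ?_).hasDerivWithinAt
    ring
  have hderiv_le (t : ℝ) (ht : t ∈ Set.Icc (-|x|) |x|) : ‖-tanh t ^ 2‖ ≤ |x| ^ 2 := by
    rw [norm_neg, norm_pow, norm_eq_abs]
    exact pow_le_pow_left₀ (abs_nonneg _) ((abs_tanh_le_abs t).trans (abs_le.2 ht)) 2
  have h := (convex_Icc (-|x|) |x|).norm_image_sub_le_of_norm_hasDerivWithin_le
    (fun t _ => hderiv t) hderiv_le
    ⟨neg_nonpos.2 (abs_nonneg x), abs_nonneg x⟩ ⟨neg_abs_le x, le_abs_self x⟩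
  simp only [tanh_zero, sub_zero, norm_eq_abs] at h
  calc |tanh x - x| ≤ |x| ^ 2 * |x| := h
    _ = |x| ^ 3 := by ring

end Real

noncomputable def boltzmannPrice (β Pb Pa θ : ℝ) : ℝ :=
  (exp (-β * (1 / 2 + θ)) * Pb + exp (-β * (1 / 2 - θ)) * Pa) /
    (exp (-β * (1 / 2 + θ)) + exp (-β * (1 / 2 - θ)))

theorem boltzmannPrice_eq_mid_add_tanh (β Pb Pa θ : ℝ) :
    boltzmannPrice β Pb Pa θ = (Pb + Pa) / 2 + (Pa - Pb) / 2 * tanh (β * θ) := by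
  have hb : exp (-β * (1 / 2 + θ)) = exp (-(β / 2)) * exp (-(β * θ)) := by
    rw [← exp_add]; ring_nf
  have ha : exp (-β * (1 / 2 - θ)) = exp (-(β / 2)) * exp (β * θ) := by
    rw [← exp_add]; ring_nf
  rw [boltzmannPrice, hb, ha, tanh_eq]
  field_simp
  ring

theorem abs_boltzmannPrice_sub_linear_le (β Pb Pa θ : ℝ) :
    |boltzmannPrice β Pb Pa θ - ((Pb + Pa) / 2 + β * (Pa - Pb) / 2 * θ)| ≤
      |Pa - Pb| / 2 * |β| ^ 3 * |θ| ^ 3 := by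
  have herror : boltzmannPrice β Pb Pa θ - ((Pb + Pa) / 2 + β * (Pa - Pb) / 2 * θ) =
      (Pa - Pb) / 2 * (tanh (β * θ) - β * θ) := by
    rw [boltzmannPrice_eq_mid_add_tanh]; ring
  calc |boltzmannPrice β Pb Pa θ - ((Pb + Pa) / 2 + β * (Pa - Pb) / 2 * θ)|
      = |Pa - Pb| / 2 * |tanh (β * θ) - β * θ| := by
        rw [herror, abs_mul, abs_div, abs_two]
    _ ≤ |Pa - Pb| / 2 * |β * θ| ^ 3 := by
        gcongr; exact abs_tanh_sub_self_le _
    _ = |Pa - Pb| / 2 * |β| ^ 3 * |θ| ^ 3 := by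
        rw [abs_mul, mul_pow, mul_assoc]

theorem stmt_6_general (β Pb Pa : ℝ) :
    ∃ C : ℝ, ∀ θ : ℝ, θ ∈ Set.Icc (-(1 / 2) : ℝ) (1 / 2) →
      |(Real.exp (-β * (1 / 2 + θ)) * Pb + Real.exp (-β * (1 / 2 - θ)) * Pa) /
          (Real.exp (-β * (1 / 2 + θ)) + Real.exp (-β * (1 / 2 - θ))) -
        ((Pb + Pa) / 2 + β * (Pa - Pb) / 2 * θ)| ≤ C * |θ| ^ 3 :=
  ⟨|Pa - Pb| / 2 * |β| ^ 3, fun θ _ => abs_boltzmannPrice_sub_linear_le β Pb Pa θ⟩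

/-- Taylor approximation of the Boltzmann price around balanced imbalance:
the error of the linear approximation is `O(|θ|³)` uniformly on `[-1/2, 1/2]`. -/
theorem stmt_6 (β Pb Pa : ℝ) (hβ : 0 ≤ β) (hP : Pb ≤ Pa) :
    ∃ C : ℝ, ∀ θ : ℝ, θ ∈ Set.Icc (-(1 / 2) : ℝ) (1 / 2) →
      |(Real.exp (-β * (1 / 2 + θ)) * Pb + Real.exp (-β * (1 / 2 - θ)) * Pa) /
          (Real.exp (-β * (1 / 2 + θ)) + Real.exp (-β * (1 / 2 - θ))) -
        ((Pb + Pa) / 2 + β * (Pa - Pb) / 2 * θ)| ≤ C * |θ| ^ 3 :=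
  stmt_6_general β Pb Pa
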